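/- Let K̂_n (n ≥ 4) be the complete graph K_n with one edge subdivided. Then the sum index of K̂_n equals 2n − 4. -/

import Mathlib

open SimpleGraph

/-! If `a₀ < ⋯ < aₙ₋₁` are the labels of the `Kₙ`-vertices, the `2n - 3` sums
`a₀ + a₁ < a₀ + a₂ < ⋯ < a₀ + aₙ₋₁ < a₁ + aₙ₋₁ < ⋯ < aₙ₋₂ + aₙ₋₁` come from distinct pairs,
and at most one of these pairs is the subdivided edge, so at least `2n - 4` edge sums occur.
Conversely, labelling the `Kₙ`-vertices `0, …, n - 1` and the new vertex `n` gives exactly the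
sums `2, …, 2n - 3`. -/

/-- `K̂ n`: the complete graph on `Fin n` with the edge between vertices `0` and `1`
subdivided by the new vertex `Sum.inr ()`. -/
def hatK (n : ℕ) : SimpleGraph (Fin n ⊕ Unit) :=
  SimpleGraph.fromRel (fun a b =>
    match a, b with
    | Sum.inl i, Sum.inl j => ¬(((i : ℕ) = 0 ∧ (j : ℕ) = 1) ∨ ((i : ℕ) = 1 ∧ (j : ℕ) = 0))
    | Sum.inl i, Sum.inr _ => (i : ℕ) = 0 ∨ (i : ℕ) = 1
    | Sum.inr _, Sum.inl j => (j : ℕ) = 0 ∨ (j : ℕ) = 1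
    | Sum.inr _, Sum.inr _ => False)

/-- The sum index of a finite simple graph. -/
noncomputable def sumIndex {V : Type*} [Fintype V] (G : SimpleGraph V) : ℕ :=
  sInf {n | ∃ f : V → ℤ, Function.Injective f ∧
    {s : ℤ | ∃ u v, G.Adj u v ∧ s = f u + f v}.ncard = n}

def edgeSums {V α : Type*} [Add α] (G : SimpleGraph V) (f : V → α) : Set α :=
  {s | ∃ u v, G.Adj u v ∧ s = f u + f v}

section EdgeSums

variable {V W α : Type*} [Add α]

lemma edgeSums_finite [Finite V] (G : SimpleGraph V) (f : V → α) : (edgeSums G f).Finite :=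
  (Set.finite_range fun p : V × V => f p.1 + f p.2).subset <| by
    rintro s ⟨u, v, -, rfl⟩
    exact ⟨(u, v), rfl⟩

lemma edgeSums_comp_subset {G : SimpleGraph V} {H : SimpleGraph W} (φ : G →g H) (f : W → α) :
    edgeSums G (f ∘ φ) ⊆ edgeSums H f := by
  rintro s ⟨u, v, huv, rfl⟩
  exact ⟨φ u, φ v, φ.map_adj huv, rfl⟩

end EdgeSums

lemma sumIndex_eq_of_forall_le {V : Type*} [Fintype V] {G : SimpleGraph V} {m : ℕ} {f : V → ℤ}
    (hf : Function.Injective f) (hfm : (edgeSums G f).ncard = m)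
    (hle : ∀ f : V → ℤ, Function.Injective f → m ≤ (edgeSums G f).ncard) :
    sumIndex G = m :=
  le_antisymm (Nat.sInf_le ⟨f, hf, hfm⟩) <|
    le_csInf ⟨m, f, hf, hfm⟩ fun _ ⟨f, hf, hfm⟩ => hfm ▸ hle f hf

section Chain

variable {n : ℕ}

def chainPair (k : Fin (2 * n - 3)) : Fin n × Fin n :=
  if h : (k : ℕ) < n - 1 then (⟨0, by omega⟩, ⟨k + 1, by omega⟩)
  else (⟨k + 2 - n, by have := k.2; omega⟩, ⟨n - 1, by have := k.2; omega⟩)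

lemma chainPair_fst_lt_snd (k : Fin (2 * n - 3)) : (chainPair k).1 < (chainPair k).2 := by
  have := k.2
  unfold chainPair
  split_ifs <;> simp only [Fin.mk_lt_mk] <;> omega

variable {α : Type*} [AddCommMonoid α] [LinearOrder α] [IsOrderedCancelAddMonoid α]

lemma strictMono_chainPair_sum {g : Fin n → α} (hg : StrictMono g) :
    StrictMono fun k : Fin (2 * n - 3) => g (chainPair k).1 + g (chainPair k).2 := by
  intro k l hkl
  have hkl' : (k : ℕ) < l := hkl
  have := l.2
  simp only [chainPair]
  split_ifs
  · exact add_lt_add_right (hg (Fin.mk_lt_mk.mpr (by omega))) _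
  · exact add_lt_add_of_lt_of_le (hg (Fin.mk_lt_mk.mpr (by omega)))
      (hg.monotone (Fin.mk_le_mk.mpr (by omega)))
  · omega
  · exact add_lt_add_left (hg (Fin.mk_lt_mk.mpr (by omega))) _

lemma le_ncard_edgeSums_of_strictMono {g : Fin n → α} (hg : StrictMono g)
    (e : Sym2 (Fin n)) :
    2 * n - 4 ≤ (edgeSums ((⊤ : SimpleGraph (Fin n)).deleteEdges {e}) g).ncard := by
  set c := fun k : Fin (2 * n - 3) => g (chainPair k).1 + g (chainPair k).2
  have hc : StrictMono c := strictMono_chainPair_sum hg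
  set q := fun k : Fin (2 * n - 3) => s((chainPair k).1, (chainPair k).2)
  -- equal unordered pairs have equal sums, and the sums along the chain are distinct
  have hq : Function.Injective q := fun k l hkl => hc.injective <| by
    rcases Sym2.eq_iff.mp hkl with ⟨h₁, h₂⟩ | ⟨h₁, h₂⟩
    · simp only [c, h₁, h₂]
    · simp only [c, h₁, h₂, add_comm]
  set T := Finset.univ.filter fun k => q k ≠ e
  have hT : 2 * n - 4 ≤ T.card := by
    have hsplit : (Finset.univ.filter fun k => q k = e).card + T.card = 2 * n - 3 := by
      rw [Finset.card_filter_add_card_filter_not, Finset.card_univ, Fintype.card_fin]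
    have hbad : (Finset.univ.filter fun k => q k = e).card ≤ 1 :=
      Finset.card_le_one.mpr fun k hk l hl => hq <| by
        rw [(Finset.mem_filter.mp hk).2, (Finset.mem_filter.mp hl).2]
    omega
  have hsub : (↑(T.image c) : Set α) ⊆ edgeSums ((⊤ : SimpleGraph (Fin n)).deleteEdges {e}) g := by
    intro s hs
    obtain ⟨k, hk, rfl⟩ := Finset.mem_coe.mp hs |> Finset.mem_image.mp
    refine ⟨_, _, ?_, rfl⟩
    simpa [(chainPair_fst_lt_snd k).ne] using (Finset.mem_filter.mp hk).2
  calc 2 * n - 4 ≤ T.card := hT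
    _ = (T.image c).card := (Finset.card_image_of_injective _ hc.injective).symm
    _ ≤ _ := by
      rw [← Set.ncard_coe_finset]
      exact Set.ncard_le_ncard hsub (edgeSums_finite _ _)

lemma le_ncard_edgeSums_top_deleteEdges {f : Fin n → α} (hf : Function.Injective f)
    (e : Sym2 (Fin n)) :
    2 * n - 4 ≤ (edgeSums ((⊤ : SimpleGraph (Fin n)).deleteEdges {e}) f).ncard := by
  set σ := Tuple.sort f
  have hg : StrictMono (f ∘ σ) :=
    (Tuple.monotone_sort f).strictMono_of_injective (hf.comp σ.injective)
  let φ : (⊤ : SimpleGraph (Fin n)).deleteEdges {e.map σ.symm} →g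
      (⊤ : SimpleGraph (Fin n)).deleteEdges {e} :=
    ⟨σ, fun {u v} huv => by
      simp only [deleteEdges_adj, top_adj, Set.mem_singleton_iff] at huv ⊢
      refine ⟨σ.injective.ne huv.1, fun he => huv.2 ?_⟩
      simp only [← he, Sym2.map_mk, Equiv.symm_apply_apply]⟩
  exact (le_ncard_edgeSums_of_strictMono hg _).trans <|
    Set.ncard_le_ncard (edgeSums_comp_subset φ f) (edgeSums_finite _ _)

end Chain

section HatK

variable {n : ℕ}

@[simp]
lemma hatK_adj_inl_inl {i j : Fin n} :
    (hatK n).Adj (.inl i) (.inl j) ↔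
      (i : ℕ) ≠ j ∧ ¬(((i : ℕ) = 0 ∧ (j : ℕ) = 1) ∨ ((i : ℕ) = 1 ∧ (j : ℕ) = 0)) := by
  simp only [hatK, fromRel_adj, ne_eq, Sum.inl.injEq, Fin.ext_iff]
  omega

@[simp]
lemma hatK_adj_inl_inr {i : Fin n} {u : Unit} :
    (hatK n).Adj (.inl i) (.inr u) ↔ (i : ℕ) = 0 ∨ (i : ℕ) = 1 := by
  simp [hatK]

@[simp]
lemma hatK_adj_inr_inl {i : Fin n} {u : Unit} :
    (hatK n).Adj (.inr u) (.inl i) ↔ (i : ℕ) = 0 ∨ (i : ℕ) = 1 := by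
  simp [hatK]

def hatK.inlHom (hn : 1 < n) :
    (⊤ : SimpleGraph (Fin n)).deleteEdges {s(⟨0, by omega⟩, ⟨1, hn⟩)} →g hatK n :=
  ⟨Sum.inl, fun {u v} huv => by
    simp only [deleteEdges_adj, top_adj, Set.mem_singleton_iff, Sym2.eq_iff, Fin.ext_iff] at huv
    simp only [hatK_adj_inl_inl]
    omega⟩

lemma le_ncard_edgeSums_hatK (hn : 1 < n) {f : Fin n ⊕ Unit → ℤ}
    (hf : Function.Injective f) : 2 * n - 4 ≤ (edgeSums (hatK n) f).ncard :=
  (le_ncard_edgeSums_top_deleteEdges (hf.comp Sum.inl_injective) _).trans <|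
    Set.ncard_le_ncard (edgeSums_comp_subset (hatK.inlHom hn) f) (edgeSums_finite _ _)

def hatK.label (n : ℕ) : Fin n ⊕ Unit → ℤ := Sum.elim (fun i => (i : ℤ)) fun _ => (n : ℤ)

lemma hatK.label_injective : Function.Injective (hatK.label n) := by
  rintro (i | ⟨⟩) (j | ⟨⟩) h <;> simp only [hatK.label, Sum.elim_inl, Sum.elim_inr] at h
  · exact congrArg Sum.inl (Fin.ext (by exact_mod_cast h))
  · omega
  · omega
  · rfl

lemma edgeSums_hatK_label (hn : 4 ≤ n) :
    edgeSums (hatK n) (hatK.label n) = Set.Icc 2 (2 * (n : ℤ) - 3) := by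
  ext s
  constructor
  · rintro ⟨u | ⟨⟩, v | ⟨⟩, huv, rfl⟩ <;>
      simp only [hatK_adj_inl_inl, hatK_adj_inl_inr, hatK_adj_inr_inl, SimpleGraph.irrefl,
        hatK.label, Sum.elim_inl, Sum.elim_inr, Set.mem_Icc] at huv ⊢ <;> omega
  · rintro ⟨hs₁, hs₂⟩
    obtain ⟨i, j, hij, hjn, h01, rfl⟩ : ∃ i j : ℕ, i < j ∧ j < n ∧ ¬(i = 0 ∧ j = 1) ∧ s = i + j :=
      if h : s < n then ⟨0, s.toNat, by omega⟩ else ⟨(s - (n - 1)).toNat, n - 1, by omega⟩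
    refine ⟨Sum.inl ⟨i, by omega⟩, Sum.inl ⟨j, hjn⟩, ?_, rfl⟩
    simp only [hatK_adj_inl_inl]
    omega

lemma ncard_edgeSums_hatK_label (hn : 4 ≤ n) :
    (edgeSums (hatK n) (hatK.label n)).ncard = 2 * n - 4 := by
  rw [edgeSums_hatK_label hn, ← Finset.coe_Icc, Set.ncard_coe_finset, Int.card_Icc]
  omega

end HatK

theorem stmt10 (n : ℕ) (hn : 4 ≤ n) : sumIndex (hatK n) = 2 * n - 4 :=
  sumIndex_eq_of_forall_le hatK.label_injective (ncard_edgeSums_hatK_label hn)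
    fun _ hf => le_ncard_edgeSums_hatK (by omega) hf
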